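/- Let G be a finite abelian group whose Sylow 2-subgroup is P = ⟨a₁⟩ × ⋯ × ⟨aₙ⟩ with each aᵢ of order 2^{mᵢ} > 1, and let H be a subgroup of G. If H is a perfect code of G, then either H ∩ P is trivial or the projection of H ∩ P onto ⟨aᵢ⟩ is surjective for at least one i. -/

import Mathlib

/-- `H` is a subgroup perfect code of `G`: `H` is a perfect code in some Cayley graph of
`G`, equivalently there is an inverse-closed left transversal of `H` in `G` containing
the identity. -/
def IsSubgroupPerfectCode {G : Type*} [Group G] (H : Subgroup G) : Prop :=
  ∃ L : Set G, L⁻¹ = L ∧ (1 : G) ∈ L ∧ Subgroup.IsComplement L (H : Set G)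

/-- `H` is a subgroup total perfect code of `G`: `H` is a total perfect code in some Cayley
graph of `G`, equivalently there is an inverse-closed subset of `G \ {e}` that is a left
transversal of `H` in `G`. -/
def IsSubgroupTotalPerfectCode {G : Type*} [Group G] (H : Subgroup G) : Prop :=
  ∃ S : Set G, S⁻¹ = S ∧ (1 : G) ∉ S ∧ Subgroup.IsComplement S (H : Set G)

theorem code_criterion {G : Type*} [CommGroup G] {H : Subgroup G} (hH : IsSubgroupPerfectCode H)
    (g : G) (hg : g ^ 2 ∈ H) : ∃ h ∈ H, (g * h) ^ 2 = 1 := by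
  obtain ⟨L, hLinv, h1, hcomp⟩ := hH
  obtain ⟨⟨⟨l, hl⟩, ⟨h₀, hh₀⟩⟩, hx, -⟩ := hcomp.existsUnique g
  simp only at hx
  have hl2 : l ^ 2 ∈ H := by
    have : l ^ 2 = g ^ 2 * ((h₀ : G)⁻¹) ^ 2 := by
      rw [← hx]; rw [mul_pow]; group
    rw [this]
    exact H.mul_mem hg (H.pow_mem (H.inv_mem hh₀) 2)
  have hlinv : l⁻¹ ∈ L := by rw [← hLinv]; exact Set.inv_mem_inv.mpr hl
  have key : (⟨⟨l⁻¹, hlinv⟩, ⟨1, H.one_mem⟩⟩ : L × (H : Set G)) =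
      ⟨⟨l, hl⟩, ⟨l⁻¹ * l⁻¹, by
        have h' := H.inv_mem hl2
        rw [← pow_two, inv_pow]
        exact h'⟩⟩ := by
    apply hcomp.injective
    simp [mul_assoc]
  have hll : l⁻¹ = l := congrArg (fun z => (z.1 : G)) key
  refine ⟨h₀⁻¹, H.inv_mem hh₀, ?_⟩
  have hgl : g * h₀⁻¹ = l := by rw [← hx]; group
  rw [hgl, pow_two]
  nth_rewrite 1 [← hll]
  exact inv_mul_cancel l

theorem sq_or_gen {G : Type*} [Group G] (a x : G) (m : ℕ) (ho : orderOf a = 2 ^ m)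
    (hx : x ∈ Subgroup.zpowers a) :
    (∃ y ∈ Subgroup.zpowers a, y ^ 2 = x) ∨ a ∈ Subgroup.zpowers x := by
  obtain ⟨k, hk⟩ := hx
  set c : ℕ := (k % ((2:ℤ) ^ m)).toNat with hc
  have h0 : ((c : ℤ)) = k % ((2:ℤ)^m) := Int.toNat_of_nonneg (Int.emod_nonneg k (by positivity))
  have h1 : k % ((2:ℤ)^m) < ((2:ℤ))^m := Int.emod_lt_of_pos k (by positivity)
  have h2 : ((2:ℤ))^m = ((2^m : ℕ):ℤ) := by push_cast; ring
  have hclt : c < 2 ^ m := by omega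
  have hcx : a ^ c = x := by
    rw [← hk, ← zpow_natCast, h0]
    have h1 := zpow_mod_orderOf a k
    rw [ho] at h1
    push_cast at h1 ⊢
    exact h1
  rcases Nat.even_or_odd c with ⟨d, hd⟩ | hodd
  · exact Or.inl ⟨a ^ d, Subgroup.pow_mem _ (Subgroup.mem_zpowers a) d, by
      rw [← pow_mul, ← hcx, hd, mul_comm, two_mul]⟩
  · right
    have hcop : Nat.Coprime c (2 ^ m) :=
      Nat.Coprime.pow_right m (Nat.coprime_two_right.mpr hodd)
    have hk1 : 1 < 2 ^ m := by
      have : 1 ≤ c := hodd.pos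
      omega
    obtain ⟨d, -, hd⟩ := Nat.exists_mul_mod_eq_one_of_coprime hcop hk1
    rw [Subgroup.mem_zpowers_iff]
    refine ⟨(d : ℤ), ?_⟩
    rw [zpow_natCast, ← hcx, ← pow_mul, ← pow_mod_orderOf, ho, hd, pow_one]

theorem mem_sylow_two {G : Type*} [CommGroup G] [Fintype G] (P : Sylow 2 G)
    (g : G) (s : ℕ) (hg : orderOf g = 2 ^ s) : g ∈ P.toSubgroup := by
  have hp : IsPGroup 2 (Subgroup.zpowers g) :=
    IsPGroup.of_card ((Nat.card_zpowers g).trans hg)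
  obtain ⟨Q, hQ⟩ := hp.exists_le_sylow
  haveI : Unique (Sylow 2 G) := Sylow.unique_of_normal Q (Subgroup.normal_of_comm _)
  have : Q = P := Subsingleton.elim _ _
  exact this ▸ hQ (Subgroup.mem_zpowers g)

/-- Let G be a finite abelian group whose Sylow 2-subgroup P is the internal direct
product of cyclic subgroups ⟨a i⟩ of order 2^(m i) > 1 (witnessed by the isomorphism f,
whose inverse gives the projections). If a subgroup H is a perfect code of G, then either
H ∩ P is trivial or H ∩ P projects onto ⟨a i⟩ for some i. -/
theorem abelian_perfect_code_projects {G : Type*} [CommGroup G] [Fintype G]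
    (P : Sylow 2 G) (n : ℕ) (a : Fin n → G) (m : Fin n → ℕ) (hm : ∀ i, 1 ≤ m i)
    (ho : ∀ i, orderOf (a i) = 2 ^ m i)
    (f : (∀ i, Subgroup.zpowers (a i)) ≃* P.toSubgroup)
    (hf : ∀ x : ∀ i, Subgroup.zpowers (a i), ((f x : P.toSubgroup) : G) = ∏ i, (x i : G))
    (H : Subgroup G) (hH : IsSubgroupPerfectCode H) :
    H ⊓ P.toSubgroup = ⊥ ∨
      ∃ i, ∀ y : Subgroup.zpowers (a i),
        ∃ p : P.toSubgroup, (p : G) ∈ H ∧ f.symm p i = y := by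
  by_contra hcon
  push_neg at hcon
  obtain ⟨hne, hns⟩ := hcon
  -- every element of H ∩ P is a square in P
  have hsq : ∀ q : P.toSubgroup, (q : G) ∈ H → ∃ g : P.toSubgroup, g ^ 2 = q := by
    intro q hq
    have key : ∀ i, ∃ y : (Subgroup.zpowers (a i)), y ^ 2 = f.symm q i := by
      intro i
      obtain ⟨y0, hy0⟩ := hns i
      rcases sq_or_gen (a i) ((f.symm q i : G)) (m i) (ho i) (f.symm q i).2 with
        ⟨y, hy, hysq⟩ | hgen
      · exact ⟨⟨y, hy⟩, Subtype.ext (by simpa using hysq)⟩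
      · exfalso
        have hle : Subgroup.zpowers (a i) ≤ Subgroup.zpowers ((f.symm q i : G)) :=
          Subgroup.zpowers_le.mpr hgen
        obtain ⟨d, hd⟩ := hle y0.2
        refine hy0 (q ^ d) (by simpa using H.zpow_mem hq d) ?_
        have h1 : f.symm (q ^ d) i = (f.symm q) i ^ d := by
          rw [map_zpow]; rfl
        rw [h1]
        ext
        simpa using hd
    choose y hy using key
    refine ⟨f y, ?_⟩
    rw [← map_pow]
    have : y ^ 2 = f.symm q := funext hy
    rw [this, MulEquiv.apply_symm_apply]
  -- elements of unbounded 2-power order in H ∩ P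
  have main : ∀ k : ℕ, ∃ q : G, q ∈ H ⊓ P.toSubgroup ∧ orderOf q = 2 ^ (k + 1) := by
    intro k
    induction k with
    | zero =>
      obtain ⟨q0, hq0⟩ := Subgroup.ne_bot_iff_exists_ne_one.mp hne
      have hq0P : (q0 : G) ∈ P.toSubgroup := q0.2.2
      obtain ⟨j, hj⟩ := IsPGroup.iff_orderOf.mp P.2 ⟨(q0 : G), hq0P⟩
      have hjG : orderOf (q0 : G) = 2 ^ j := by
        rw [← Subgroup.orderOf_coe] at hj
        exact hj
      have hj1 : 1 ≤ j := by
        rcases Nat.eq_zero_or_pos j with h | h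
        · exfalso
          rw [h, pow_zero, orderOf_eq_one_iff] at hjG
          exact hq0 (by ext; exact hjG)
        · exact h
      refine ⟨(q0 : G) ^ 2 ^ (j - 1), Subgroup.pow_mem _ q0.2 _, ?_⟩
      rw [orderOf_pow, hjG, pow_one]
      rw [Nat.gcd_eq_right (pow_dvd_pow 2 (by omega))]
      rw [Nat.pow_div (by omega) (by norm_num), show j - (j - 1) = 1 by omega]

    | succ k ih =>
      obtain ⟨q, hqmem, hord⟩ := ih
      obtain ⟨g, hg⟩ := hsq ⟨q, hqmem.2⟩ hqmem.1
      have hg2 : (g : G) ^ 2 = q := by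
        have := congrArg (Subtype.val) hg
        push_cast at this
        exact this
      obtain ⟨h, hh, hgh⟩ := code_criterion hH (g : G) (by rw [hg2]; exact hqmem.1)
      have hh2 : h ^ 2 = q⁻¹ := by
        have h1 : q * h ^ 2 = 1 := by rw [← hg2, ← mul_pow]; exact hgh
        exact (inv_eq_of_mul_eq_one_right h1).symm
      have h2ord : orderOf (h ^ 2) = 2 ^ (k + 1) := by rw [hh2, orderOf_inv, hord]
      have hdvd : orderOf h ∣ 2 ^ (k + 2) := by
        apply orderOf_dvd_of_pow_eq_one
        rw [show 2 ^ (k + 2) = 2 * 2 ^ (k + 1) by ring, pow_mul, hh2, inv_pow, ← hord,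
          pow_orderOf_eq_one, inv_one]
      obtain ⟨s, hsle, hs⟩ := (Nat.dvd_prime_pow Nat.prime_two).mp hdvd
      have hdvd2 : 2 ^ (k + 1) ∣ orderOf h := h2ord ▸ orderOf_pow_dvd 2
      have hs2 : orderOf h = 2 ^ (k + 2) := by
        rcases Nat.lt_or_ge s (k + 2) with hlt | hge
        · exfalso
          have hd1 : 2 ^ (k + 1) ∣ 2 ^ s := hs ▸ hdvd2
          have hk1s : k + 1 ≤ s := (Nat.pow_dvd_pow_iff_le_right (by omega)).mp hd1
          have hseq : s = k + 1 := by omega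
          have hone : (h ^ 2) ^ 2 ^ k = 1 := by
            rw [← pow_mul, show 2 * 2 ^ k = 2 ^ (k + 1) by ring, ← hseq, ← hs]
            exact pow_orderOf_eq_one h
          have hdd := orderOf_dvd_of_pow_eq_one hone
          rw [h2ord] at hdd
          have := Nat.le_of_dvd (by positivity) hdd
          have h2k : (2:ℕ) ^ k < 2 ^ (k + 1) := by
            exact Nat.pow_lt_pow_right (by norm_num) (by omega)
          omega
        · rw [hs, le_antisymm hsle hge]
      exact ⟨h, ⟨hh, mem_sylow_two P h (k + 2) hs2⟩, hs2⟩
  obtain ⟨q, -, hq⟩ := main (Fintype.card G)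
  have h1 : orderOf q ≤ Fintype.card G :=
    Nat.le_of_dvd Fintype.card_pos orderOf_dvd_card
  have h2 : Fintype.card G < 2 ^ Fintype.card G := Nat.lt_two_pow_self
  have h3 : (2:ℕ) ^ Fintype.card G ≤ 2 ^ (Fintype.card G + 1) :=
    Nat.pow_le_pow_right (by norm_num) (by omega)
  omega
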